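/- Let A be a commutative unital complex Banach *-algebra and S a dense *-subalgebra of A. The following are equivalent: (i) Sp_A(a) ⊆ ℝ for every Hermitian a ∈ A; (ii) Sp_A(a) ⊆ ℝ for every Hermitian a ∈ S; (iii) Sp_A(a* a) ⊆ [0,∞) for every a ∈ S. -/
import Mathlib

open WeakDual

theorem stmt6 {A : Type*} [NormedCommRing A] [NormedAlgebra ℂ A] [CompleteSpace A]
    [StarRing A] [ContinuousStar A]
    (S : Subalgebra ℂ A) (hstar : ∀ a ∈ S, star a ∈ S) (hdense : Dense (S : Set A)) :
    ((∀ a : A, star a = a → spectrum ℂ a ⊆ {z : ℂ | z.im = 0}) ↔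
      (∀ a ∈ S, star a = a → spectrum ℂ a ⊆ {z : ℂ | z.im = 0})) ∧
    ((∀ a ∈ S, star a = a → spectrum ℂ a ⊆ {z : ℂ | z.im = 0}) ↔
      (∀ a ∈ S, spectrum ℂ (star a * a) ⊆ {z : ℂ | 0 ≤ z.re ∧ z.im = 0})) := by
  -- (ii) → (i)
  have hii_to_i : (∀ a ∈ S, star a = a → spectrum ℂ a ⊆ {z : ℂ | z.im = 0}) →
      (∀ a : A, star a = a → spectrum ℂ a ⊆ {z : ℂ | z.im = 0}) := by
    intro h a ha z hz
    rw [WeakDual.CharacterSpace.mem_spectrum_iff_exists] at hz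
    obtain ⟨φ, rfl⟩ := hz
    have key : ∀ s ∈ S, star s = s → (φ s).im = 0 := fun s hs hss =>
      h s hs hss (AlgHom.apply_mem_spectrum (CharacterSpace.equivAlgHom φ) s)
    obtain ⟨u, hu, hulim⟩ := mem_closure_iff_seq_limit.mp (hdense a)
    set v : ℕ → A := fun n => u n + star (u n) with hv
    have hvS : ∀ n, v n ∈ S := fun n => S.add_mem (hu n) (hstar _ (hu n))
    have hvherm : ∀ n, star (v n) = v n := by
      intro n; simp [hv, star_add, add_comm]
    have hvlim : Filter.Tendsto v Filter.atTop (nhds (a + a)) := by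
      have h1 : Filter.Tendsto (fun n => star (u n)) Filter.atTop (nhds (star a)) :=
        (continuous_star.tendsto a).comp hulim
      have := hulim.add h1
      rwa [ha] at this
    have hφlim : Filter.Tendsto (fun n => (φ (v n)).im) Filter.atTop (nhds (φ (a + a)).im) :=
      (Complex.continuous_im.tendsto _).comp (((map_continuous φ).tendsto _).comp hvlim)
    have heq : (fun n => (φ (v n)).im) = fun _ => (0 : ℝ) := by
      funext n; exact key _ (hvS n) (hvherm n)
    rw [heq] at hφlim
    have h2 : (φ (a + a)).im = 0 := tendsto_nhds_unique hφlim tendsto_const_nhds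
    rw [map_add] at h2
    simp only [Complex.add_im] at h2
    show (φ a).im = 0
    linarith
  -- under (i), every character is a *-homomorphism
  have hkey : (∀ a : A, star a = a → spectrum ℂ a ⊆ {z : ℂ | z.im = 0}) →
      ∀ (φ : characterSpace ℂ A) (a : A), φ (star a) = starRingEnd ℂ (φ a) := by
    intro h φ a
    have key : ∀ s : A, star s = s → (φ s).im = 0 := fun s hss =>
      h s hss (AlgHom.apply_mem_spectrum (CharacterSpace.equivAlgHom φ) s)
    have hφI : φ (Complex.I • (1 : A)) = Complex.I := by
      rw [map_smul, map_one, smul_eq_mul, mul_one]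
    set w : ℂ := φ (star (Complex.I • (1 : A))) with hw
    -- w = -I
    have hw_im : w.im = -1 := by
      have herm : star (Complex.I • (1 : A) + star (Complex.I • (1 : A)))
          = Complex.I • (1 : A) + star (Complex.I • (1 : A)) := by
        rw [star_add, star_star, add_comm]
      have := key _ herm
      rw [map_add, hφI] at this
      simp only [Complex.add_im, Complex.I_im] at this
      linarith
    have hw_re : w.re = 0 := by
      have herm : star (star (Complex.I • (1 : A)) * (Complex.I • (1 : A)))
          = star (Complex.I • (1 : A)) * (Complex.I • (1 : A)) := by
        rw [star_mul, star_star, mul_comm]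
      have := key _ herm
      rw [map_mul, hφI] at this
      simp only [Complex.mul_im, Complex.I_re, Complex.I_im] at this
      linarith
    -- general a
    have e1 : (φ a + φ (star a)).im = 0 := by
      have herm : star (a + star a) = a + star a := by rw [star_add, star_star, add_comm]
      have := key _ herm
      rwa [map_add] at this
    have e2 : (φ a - φ (star a)).re = 0 := by
      set b : A := Complex.I • (1 : A) * a with hb
      have herm : star (b + star b) = b + star b := by rw [star_add, star_star, add_comm]
      have := key _ herm
      rw [map_add, hb, star_mul, map_mul, map_mul, hφI, ← hw] at this
      -- this : (I * φ a + φ (star a) * w).im = 0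
      simp only [Complex.add_im, Complex.mul_im, Complex.mul_re, Complex.I_re, Complex.I_im,
        hw_re, hw_im] at this ⊢
      simp only [Complex.sub_re]
      linarith
    apply Complex.ext
    · simp only [Complex.sub_re] at e2
      simp only [Complex.conj_re]
      linarith
    · simp only [Complex.conj_im]
      simp only [Complex.add_im] at e1
      linarith
  refine ⟨⟨fun h a _ ha => h a ha, hii_to_i⟩, ?_, ?_⟩
  · -- (ii) → (iii)
    intro h a haS z hz
    rw [WeakDual.CharacterSpace.mem_spectrum_iff_exists] at hz
    obtain ⟨φ, rfl⟩ := hz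
    have hstar_a : φ (star a) = starRingEnd ℂ (φ a) := hkey (hii_to_i h) φ a
    rw [map_mul, hstar_a]
    constructor
    · show 0 ≤ (starRingEnd ℂ (φ a) * φ a).re
      simp only [Complex.mul_re, Complex.conj_re, Complex.conj_im]
      nlinarith [sq_nonneg (φ a).re, sq_nonneg (φ a).im]
    · show (starRingEnd ℂ (φ a) * φ a).im = 0
      simp only [Complex.mul_im, Complex.conj_re, Complex.conj_im]
      ring
  · -- (iii) → (ii)
    intro h a haS ha z hz
    rw [WeakDual.CharacterSpace.mem_spectrum_iff_exists] at hz
    obtain ⟨φ, rfl⟩ := hz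
    have hmem : φ (star a * a) ∈ spectrum ℂ (star a * a) :=
      AlgHom.apply_mem_spectrum (CharacterSpace.equivAlgHom φ) _
    obtain ⟨hre, him⟩ := h a haS hmem
    rw [map_mul, ha] at hre him
    simp only [Complex.mul_im] at him
    simp only [Complex.mul_re] at hre
    show (φ a).im = 0
    have h1 : (φ a).re * (φ a).im = 0 := by linarith
    rcases mul_eq_zero.mp h1 with h2 | h2
    · rw [h2] at hre
      nlinarith [mul_self_nonneg (φ a).im]
    · exact h2
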